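/- arXiv:2112.09923 — 5 statements merged into one kernel-verified Lean document; each statement's English description precedes it below -/
import Mathlib

section
/- Let λ = (λ_1,...,λ_n) be a composition of N and for each i let μ_i be a partition of λ_i, with μ^Σ the pointwise sum partition. For any standard tableaux T^{μ_i} ∈ Std(μ_i) (i = 1,...,n), the stacked filling T^Σ = stk(T^{μ_1},...,T^{μ_n}) is a standard tableau of shape μ^Σ: every element of {1,...,N} occurs exactly once among its entries, its entries strictly increase along each row, and its entries strictly increase down each column. -/
/-- A list of naturals is a partition: non-increasing with positive parts. -/
def IsPartitionL (μ : List ℕ) : Prop :=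
  μ.Pairwise (· ≥ ·) ∧ ∀ x ∈ μ, 0 < x

/-- A standard tableau of shape `μ` (a partition of `μ.sum`), given as a function on
0-indexed boxes `(r, c)` with `r < μ.length` and `c < μ.getD r 0`: the entries are exactly
`{1, ..., μ.sum}` each occurring once, strictly increasing along rows and down columns. -/
structure IsStdTableau (μ : List ℕ) (T : ℕ → ℕ → ℕ) : Prop where
  entry_mem : ∀ r c, r < μ.length → c < μ.getD r 0 → 1 ≤ T r c ∧ T r c ≤ μ.sum
  exists_box : ∀ a, 1 ≤ a → a ≤ μ.sum → ∃ r c, r < μ.length ∧ c < μ.getD r 0 ∧ T r c = a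
  inj : ∀ r c r' c', r < μ.length → c < μ.getD r 0 → r' < μ.length → c' < μ.getD r' 0 →
      T r c = T r' c' → r = r' ∧ c = c'
  row_lt : ∀ r c c', r < μ.length → c < c' → c' < μ.getD r 0 → T r c < T r c'
  col_lt : ∀ r r' c, r < r' → r' < μ.length → c < μ.getD r' 0 → T r c < T r' c

/-- `shift μ k = λ_0 + ... + λ_{k-1}` where `λ_l = (μ l).sum`. -/
def shift (μ : ℕ → List ℕ) (k : ℕ) : ℕ := ∑ l ∈ Finset.range k, (μ l).sum

/-- The maximal number of parts among `μ 0, ..., μ (n-1)`. -/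
def maxLen (n : ℕ) (μ : ℕ → List ℕ) : ℕ := (Finset.range n).sup fun k => (μ k).length

/-- The pointwise sum partition `μ^Σ`, with `j`-th part `Σ_{i<n} μ_{i,j}`. -/
def sumShape (n : ℕ) (μ : ℕ → List ℕ) : List ℕ :=
  List.ofFn fun r : Fin (maxLen n μ) => ∑ k ∈ Finset.range n, (μ k).getD (r : ℕ) 0

/-- Row `r` of the stacked filling: the concatenation over `k = 0, ..., n-1` of row `r`
of `T k`, with every entry of the `k`-th row increased by `λ_0 + ... + λ_{k-1}`. -/
def stkRow (n : ℕ) (μ : ℕ → List ℕ) (T : ℕ → ℕ → ℕ → ℕ) (r : ℕ) : List ℕ :=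
  ((List.range n).map fun k =>
    (List.range ((μ k).getD r 0)).map fun c => T k r c + shift μ k).flatten

/-- The entry of the stacked filling `stk (T 0, ..., T (n-1))` in box `(r, c)`. -/
def stkEntry (n : ℕ) (μ : ℕ → List ℕ) (T : ℕ → ℕ → ℕ → ℕ) (r c : ℕ) : ℕ :=
  (stkRow n μ T r).getD c 0


/-!
Row `r` of `μ^Σ` is cut into consecutive blocks, the `k`-th one of length `μ_{k,r}` and
carrying row `r` of `T k` shifted by `λ_0 + ⋯ + λ_{k-1}`. The shifted entries of `T k` fill
exactly the interval `(λ_0 + ⋯ + λ_{k-1}, λ_0 + ⋯ + λ_k]`, so every entry of a block is smaller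
than every entry of a later block. Since moving right along a row, or down a column (the `μ k`
being partitions, lower rows have earlier block boundaries), never decreases the block index,
each axiom of a standard tableau for `T^Σ` reduces either to the same axiom for a single `T k`
or to this comparison between blocks.
-/

open Finset

theorem exists_sum_range_le_lt_sum_range_succ (g : ℕ → ℕ) {n c : ℕ}
    (hc : c < ∑ l ∈ range n, g l) :
    ∃ k < n, ∑ l ∈ range k, g l ≤ c ∧ c < ∑ l ∈ range (k + 1), g l := by
  induction n with
  | zero => simp at hc
  | succ n ih =>
    by_cases h : c < ∑ l ∈ range n, g l
    · obtain ⟨k, hk, hle, hlt⟩ := ih h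
      exact ⟨k, by omega, hle, hlt⟩
    · exact ⟨n, by omega, by omega, hc⟩

namespace List

theorem lt_length_of_lt_getD {L : List ℕ} {r c : ℕ} (h : c < L.getD r 0) : r < L.length := by
  by_contra hr
  rw [getD_eq_default _ _ (by omega)] at h
  omega

theorem getD_le_getD_of_pairwise_ge {L : List ℕ} (hL : L.Pairwise (· ≥ ·)) {r r' : ℕ}
    (h : r ≤ r') : L.getD r' 0 ≤ L.getD r 0 := by
  rcases Nat.lt_or_ge r' L.length with hr' | hr'
  · rw [getD_eq_getElem _ _ hr', getD_eq_getElem _ _ (by omega)]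
    rcases h.eq_or_lt with rfl | hlt
    · rfl
    · exact hL.rel_get_of_lt (a := ⟨r, by omega⟩) (b := ⟨r', hr'⟩) hlt
  · rw [getD_eq_default _ _ hr']
    exact Nat.zero_le _

theorem sum_range_getD {L : List ℕ} {m : ℕ} (h : L.length ≤ m) :
    ∑ r ∈ Finset.range m, L.getD r 0 = L.sum := by
  induction L generalizing m with
  | nil => simp
  | cons a L ih =>
    obtain ⟨m, rfl⟩ : ∃ m', m = m' + 1 := ⟨m - 1, by simp at h; omega⟩
    rw [Finset.sum_range_succ', sum_cons, add_comm]
    simp only [getD_cons_succ, getD_cons_zero, ih (by simpa using h)]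

end List

namespace IsStdTableau

variable {ν : List ℕ} {t : ℕ → ℕ → ℕ} {r c c' : ℕ}

theorem entry_mem_of_lt_getD (ht : IsStdTableau ν t) (hc : c < ν.getD r 0) :
    1 ≤ t r c ∧ t r c ≤ ν.sum :=
  ht.entry_mem r c (List.lt_length_of_lt_getD hc) hc

theorem row_le (ht : IsStdTableau ν t) (hcc' : c ≤ c') (hc' : c' < ν.getD r 0) :
    t r c ≤ t r c' := by
  rcases hcc'.eq_or_lt with rfl | hlt
  · rfl
  · exact (ht.row_lt r c c' (List.lt_length_of_lt_getD hc') hlt hc').le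

end IsStdTableau

/-- The column of row `r` of `μ^Σ` at which the block coming from `μ k` starts. -/
def rowShift (μ : ℕ → List ℕ) (r k : ℕ) : ℕ := ∑ l ∈ range k, (μ l).getD r 0

def InBlock (μ : ℕ → List ℕ) (r k c : ℕ) : Prop :=
  rowShift μ r k ≤ c ∧ c < rowShift μ r (k + 1)

section Blocks

variable {n : ℕ} {μ : ℕ → List ℕ} {T : ℕ → ℕ → ℕ → ℕ} {r r' k k' c c' : ℕ}

theorem shift_succ (μ : ℕ → List ℕ) (k : ℕ) : shift μ (k + 1) = shift μ k + (μ k).sum :=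
  sum_range_succ _ _

theorem shift_mono (μ : ℕ → List ℕ) (h : k ≤ k') : shift μ k ≤ shift μ k' :=
  sum_le_sum_of_subset (range_subset_range.2 h)

theorem rowShift_succ (μ : ℕ → List ℕ) (r k : ℕ) :
    rowShift μ r (k + 1) = rowShift μ r k + (μ k).getD r 0 :=
  sum_range_succ _ _

theorem rowShift_mono (μ : ℕ → List ℕ) (r : ℕ) (h : k ≤ k') : rowShift μ r k ≤ rowShift μ r k' :=
  sum_le_sum_of_subset (range_subset_range.2 h)

theorem rowShift_le_rowShift_of_le (hμ : ∀ l < n, (μ l).Pairwise (· ≥ ·)) (hrr' : r ≤ r')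
    (hk : k ≤ n) : rowShift μ r' k ≤ rowShift μ r k :=
  sum_le_sum fun l hl =>
    List.getD_le_getD_of_pairwise_ge (hμ l (by simp at hl; omega)) hrr'

theorem length_sumShape (n : ℕ) (μ : ℕ → List ℕ) : (sumShape n μ).length = maxLen n μ := by
  simp [sumShape]

theorem length_le_maxLen (hk : k < n) : (μ k).length ≤ maxLen n μ :=
  le_sup (f := fun k => (μ k).length) (mem_range.2 hk)

theorem getD_sumShape (n : ℕ) (μ : ℕ → List ℕ) (r : ℕ) :
    (sumShape n μ).getD r 0 = rowShift μ r n := by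
  rcases Nat.lt_or_ge r (maxLen n μ) with hr | hr
  · rw [List.getD_eq_getElem _ _ (by rwa [length_sumShape])]
    simp [sumShape, rowShift]
  · rw [List.getD_eq_default _ _ (by rwa [length_sumShape]), rowShift, eq_comm]
    exact sum_eq_zero fun l hl =>
      List.getD_eq_default _ _ ((length_le_maxLen (mem_range.1 hl)).trans hr)

theorem sum_sumShape (n : ℕ) (μ : ℕ → List ℕ) : (sumShape n μ).sum = shift μ n := by
  rw [sumShape, List.sum_ofFn, Fin.sum_univ_eq_sum_range (fun r => ∑ k ∈ range n, (μ k).getD r 0),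
    sum_comm]
  exact sum_congr rfl fun k hk => List.sum_range_getD (length_le_maxLen (mem_range.1 hk))

theorem exists_inBlock (hc : c < rowShift μ r n) : ∃ k < n, InBlock μ r k c :=
  exists_sum_range_le_lt_sum_range_succ _ hc

theorem inBlock_rowShift_add (hc : c < (μ k).getD r 0) : InBlock μ r k (rowShift μ r k + c) :=
  ⟨Nat.le_add_right _ _, by rw [rowShift_succ]; omega⟩

theorem InBlock.sub_lt_getD (h : InBlock μ r k c) : c - rowShift μ r k < (μ k).getD r 0 := by
  have := rowShift_succ μ r k
  unfold InBlock at h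
  omega

/-- Block indices weakly increase along a row, and down a column once lower rows have
earlier block boundaries. -/
theorem InBlock.le_of_le (h : InBlock μ r k c) (h' : InBlock μ r' k' c') (hcc' : c ≤ c')
    (hrow : rowShift μ r' (k' + 1) ≤ rowShift μ r (k' + 1)) : k ≤ k' := by
  by_contra! hlt
  have := rowShift_mono μ r (show k' + 1 ≤ k by omega)
  unfold InBlock at h h'
  omega

theorem stkRow_succ (n : ℕ) (μ : ℕ → List ℕ) (T : ℕ → ℕ → ℕ → ℕ) (r : ℕ) :
    stkRow (n + 1) μ T r =
      stkRow n μ T r ++ (List.range ((μ n).getD r 0)).map fun c => T n r c + shift μ n := by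
  simp [stkRow, List.range_succ]

theorem length_stkRow (n : ℕ) (μ : ℕ → List ℕ) (T : ℕ → ℕ → ℕ → ℕ) (r : ℕ) :
    (stkRow n μ T r).length = rowShift μ r n := by
  induction n with
  | zero => simp [stkRow, rowShift]
  | succ n ih => simp [stkRow_succ, ih, rowShift_succ]

theorem stkEntry_of_inBlock (hk : k < n) (h : InBlock μ r k c) :
    stkEntry n μ T r c = T k r (c - rowShift μ r k) + shift μ k := by
  induction n with
  | zero => omega
  | succ n ih =>
    rw [stkEntry, stkRow_succ]
    rcases Nat.lt_or_ge k n with hkn | hkn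
    · rw [List.getD_append _ _ _ _ (by
        rw [length_stkRow]; exact h.2.trans_le (rowShift_mono μ r hkn))]
      exact ih hkn
    · obtain rfl : k = n := by omega
      rw [List.getD_append_right _ _ _ _ (by rw [length_stkRow]; exact h.1), length_stkRow,
        List.getD_eq_getElem _ _ (by simpa using h.sub_lt_getD)]
      simp

theorem IsStdTableau.add_shift_mem_Ioc (hk : IsStdTableau (μ k) (T k))
    (hc : c < (μ k).getD r 0) :
    T k r c + shift μ k ∈ Set.Ioc (shift μ k) (shift μ (k + 1)) := by
  have := hk.entry_mem_of_lt_getD hc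
  have := shift_succ μ k
  constructor <;> omega

theorem add_shift_lt_add_shift (hk : IsStdTableau (μ k) (T k)) (hk' : IsStdTableau (μ k') (T k'))
    (hkk' : k < k') (hc : c < (μ k).getD r 0) (hc' : c' < (μ k').getD r' 0) :
    T k r c + shift μ k < T k' r' c' + shift μ k' := by
  have := (hk.add_shift_mem_Ioc hc).2
  have := (hk'.add_shift_mem_Ioc hc').1
  have := shift_mono μ (show k + 1 ≤ k' by omega)
  omega

end Blocks

section Stacked

variable {n : ℕ} {μ : ℕ → List ℕ} {T : ℕ → ℕ → ℕ → ℕ} {r r' c c' : ℕ}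

theorem stkEntry_mem (hstd : ∀ k < n, IsStdTableau (μ k) (T k)) (hc : c < rowShift μ r n) :
    1 ≤ stkEntry n μ T r c ∧ stkEntry n μ T r c ≤ shift μ n := by
  obtain ⟨k, hk, hb⟩ := exists_inBlock hc
  obtain ⟨hlo, hhi⟩ := (hstd k hk).add_shift_mem_Ioc hb.sub_lt_getD
  have := shift_mono μ (show k + 1 ≤ n by omega)
  rw [stkEntry_of_inBlock hk hb]
  omega

theorem exists_stkEntry_eq (hstd : ∀ k < n, IsStdTableau (μ k) (T k)) {a : ℕ} (ha : 1 ≤ a)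
    (ha' : a ≤ shift μ n) : ∃ r c, c < rowShift μ r n ∧ stkEntry n μ T r c = a := by
  obtain ⟨k, hk, hle, hlt⟩ :=
    exists_sum_range_le_lt_sum_range_succ (fun l => (μ l).sum) (show a - 1 < shift μ n by omega)
  have hsucc := shift_succ μ k
  change shift μ k ≤ a - 1 at hle
  change a - 1 < shift μ (k + 1) at hlt
  obtain ⟨r, c, -, hc, hTc⟩ := (hstd k hk).exists_box (a - shift μ k) (by omega) (by omega)
  have hb := inBlock_rowShift_add (r := r) hc
  refine ⟨r, rowShift μ r k + c, hb.2.trans_le (rowShift_mono μ r hk), ?_⟩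
  rw [stkEntry_of_inBlock hk hb, Nat.add_sub_cancel_left, hTc]
  omega

theorem stkEntry_inj (hstd : ∀ k < n, IsStdTableau (μ k) (T k)) (hc : c < rowShift μ r n)
    (hc' : c' < rowShift μ r' n) (h : stkEntry n μ T r c = stkEntry n μ T r' c') :
    r = r' ∧ c = c' := by
  obtain ⟨k, hk, hb⟩ := exists_inBlock hc
  obtain ⟨k', hk', hb'⟩ := exists_inBlock hc'
  rw [stkEntry_of_inBlock hk hb, stkEntry_of_inBlock hk' hb'] at h
  obtain rfl : k = k' := by
    rcases Nat.lt_trichotomy k k' with hlt | heq | hgt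
    · exact absurd h (add_shift_lt_add_shift (hstd k hk) (hstd k' hk') hlt
        hb.sub_lt_getD hb'.sub_lt_getD).ne
    · exact heq
    · exact absurd h (add_shift_lt_add_shift (hstd k' hk') (hstd k hk) hgt
        hb'.sub_lt_getD hb.sub_lt_getD).ne'
  obtain ⟨rfl, hcc'⟩ := (hstd k hk).inj _ _ _ _ (List.lt_length_of_lt_getD hb.sub_lt_getD)
    hb.sub_lt_getD (List.lt_length_of_lt_getD hb'.sub_lt_getD) hb'.sub_lt_getD (by omega)
  exact ⟨rfl, by unfold InBlock at hb hb'; omega⟩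

theorem stkEntry_row_lt (hstd : ∀ k < n, IsStdTableau (μ k) (T k)) (hcc' : c < c')
    (hc' : c' < rowShift μ r n) : stkEntry n μ T r c < stkEntry n μ T r c' := by
  obtain ⟨k, hk, hb⟩ := exists_inBlock (hcc'.trans hc')
  obtain ⟨k', hk', hb'⟩ := exists_inBlock hc'
  rw [stkEntry_of_inBlock hk hb, stkEntry_of_inBlock hk' hb']
  rcases (hb.le_of_le hb' hcc'.le le_rfl).eq_or_lt with rfl | hlt
  · have := (hstd k hk).row_lt r _ _ (List.lt_length_of_lt_getD hb'.sub_lt_getD)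
      (Nat.sub_lt_sub_right hb.1 hcc') hb'.sub_lt_getD
    omega
  · exact add_shift_lt_add_shift (hstd k hk) (hstd k' hk') hlt hb.sub_lt_getD hb'.sub_lt_getD

theorem stkEntry_col_lt (hμ : ∀ k < n, (μ k).Pairwise (· ≥ ·))
    (hstd : ∀ k < n, IsStdTableau (μ k) (T k)) (hrr' : r < r') (hc : c < rowShift μ r' n) :
    stkEntry n μ T r c < stkEntry n μ T r' c := by
  have hshift : ∀ {j}, j ≤ n → rowShift μ r' j ≤ rowShift μ r j :=
    rowShift_le_rowShift_of_le hμ hrr'.le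
  obtain ⟨k, hk, hb⟩ := exists_inBlock (hc.trans_le (hshift le_rfl))
  obtain ⟨k', hk', hb'⟩ := exists_inBlock hc
  rw [stkEntry_of_inBlock hk hb, stkEntry_of_inBlock hk' hb']
  rcases (hb.le_of_le hb' le_rfl (hshift hk')).eq_or_lt with rfl | hlt
  · -- in `T k`, box `(r, c)` of `T^Σ` lies weakly left of the box directly above `(r', c)`
    have hlocal : c - rowShift μ r k ≤ c - rowShift μ r' k := by
      have := hshift hk.le
      omega
    have hcol := (hstd k hk).col_lt r r' _ hrr'
      (List.lt_length_of_lt_getD hb'.sub_lt_getD) hb'.sub_lt_getD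
    have hrow := (hstd k hk).row_le hlocal (hb'.sub_lt_getD.trans_le
      (List.getD_le_getD_of_pairwise_ge (hμ k hk) hrr'.le))
    omega
  · exact add_shift_lt_add_shift (hstd k hk) (hstd k' hk') hlt hb.sub_lt_getD hb'.sub_lt_getD

end Stacked

theorem stacked_filling_isStdTableau_general (n : ℕ) (μ : ℕ → List ℕ) (T : ℕ → ℕ → ℕ → ℕ)
    (hpart : ∀ i < n, IsPartitionL (μ i))
    (hstd : ∀ i < n, IsStdTableau (μ i) (T i)) :
    IsStdTableau (sumShape n μ) (stkEntry n μ T) := by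
  refine ⟨fun r c _ hc => ?_, fun a ha ha' => ?_, fun r c r' c' _ hc _ hc' h => ?_,
    fun r c c' _ hcc' hc' => ?_, fun r r' c hrr' _ hc => ?_⟩
  · exact sum_sumShape n μ ▸ stkEntry_mem hstd (getD_sumShape n μ r ▸ hc)
  · obtain ⟨r, c, hc, h⟩ := exists_stkEntry_eq hstd ha (sum_sumShape n μ ▸ ha')
    rw [← getD_sumShape] at hc
    exact ⟨r, c, List.lt_length_of_lt_getD hc, hc, h⟩
  · exact stkEntry_inj hstd (getD_sumShape n μ r ▸ hc) (getD_sumShape n μ r' ▸ hc') h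
  · exact stkEntry_row_lt hstd hcc' (getD_sumShape n μ r ▸ hc')
  · exact stkEntry_col_lt (fun k hk => (hpart k hk).1) hstd hrr' (getD_sumShape n μ r' ▸ hc)

/-- Let `λ = (λ_1,...,λ_n)` be a composition of `N` and for each `i` let
`μ i` be a partition of `λ_i`, with `μ^Σ` the pointwise sum partition. For any standard
tableaux `T i ∈ Std(μ i)`, the stacked filling `stk(T 0, ..., T (n-1))` is a standard
tableau of shape `μ^Σ`. -/
theorem stacked_filling_isStdTableau (N n : ℕ) (μ : ℕ → List ℕ) (T : ℕ → ℕ → ℕ → ℕ)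
    (hN : ∑ i ∈ Finset.range n, (μ i).sum = N)
    (hcomp : ∀ i < n, 0 < (μ i).sum)
    (hpart : ∀ i < n, IsPartitionL (μ i))
    (hstd : ∀ i < n, IsStdTableau (μ i) (T i)) :
    IsStdTableau (sumShape n μ) (stkEntry n μ T) :=
  stacked_filling_isStdTableau_general n μ T hpart hstd
end

section
/- Let 𝕜, V = V_1 ⊕ ... ⊕ V_n, W_j, e and e_0 be as in the context. Suppose that for each k = 1,...,n, F^{(k)}_• is a full flag of V_k satisfying e_0(F^{(k)}_d) ⊆ F^{(k)}_{d-1} for all d ≥ 1. Then F̄_• = LS(F^{(1)}_•,...,F^{(n)}_•) is a full flag of V (in particular dim F̄_i = i for all i) and satisfies e(F̄_i) ⊆ F̄_{i-1} for all i ≥ 1; that is, F̄_• lies in the Springer fibre of e. -/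
section LinearDefs

variable {𝕜 V : Type*} [Field 𝕜] [AddCommGroup V] [Module 𝕜 V]

/-- A full flag `0 = F 0 ⊂ F 1 ⊂ ... ⊂ F N = V` of an `N`-dimensional space. -/
structure IsFullFlag (N : ℕ) (F : ℕ → Submodule 𝕜 V) : Prop where
  mono : Monotone F
  bot : F 0 = ⊥
  top : F N = ⊤
  dim : ∀ i ≤ N, Module.finrank 𝕜 ↥(F i) = i

/-- A full flag `0 = F 0 ⊂ F 1 ⊂ ... ⊂ F l = U` of an `l`-dimensional subspace `U ⊆ V`. -/
structure IsFlagOf (U : Submodule 𝕜 V) (l : ℕ) (F : ℕ → Submodule 𝕜 V) : Prop where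
  mono : Monotone F
  le : ∀ d, F d ≤ U
  bot : F 0 = ⊥
  top : F l = U
  dim : ∀ d ≤ l, Module.finrank 𝕜 ↥(F d) = d

/-- `V = V_0 ⊕ ... ⊕ V_{n-1}` is an internal direct sum decomposition with
`dim V_k = lam k`. -/
structure IsDecomp (n : ℕ) (lam : ℕ → ℕ) (Vsub : ℕ → Submodule 𝕜 V) : Prop where
  dim : ∀ k < n, Module.finrank 𝕜 ↥(Vsub k) = lam k
  indep : ∀ k < n, Disjoint (Vsub k) (∑ l ∈ (Finset.range n).erase k, Vsub l)
  total : ∑ k ∈ Finset.range n, Vsub k = ⊤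

/-- Partial sums `lam 0 + ... + lam (k-1)`. -/
def pSum (lam : ℕ → ℕ) (k : ℕ) : ℕ := ∑ l ∈ Finset.range k, lam l

/-- For `1 ≤ i`, the (0-indexed) index `j` of the block containing position `i`, i.e. the
largest `j ≤ n` with `lam 0 + ... + lam (j-1) < i`. -/
def LSidx (n : ℕ) (lam : ℕ → ℕ) (i : ℕ) : ℕ :=
  Nat.findGreatest (fun j => pSum lam j < i) n

/-- The Lusztig–Spaltenstein flag: `F̄ i = W_{j-1} + F j d` where `j = LSidx n lam i` is the
block containing position `i`, `W_{j-1} = V_0 + ... + V_{j-1}` and `d = i - (lam 0 + ... + lam (j-1))`. -/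
def LSflag (n : ℕ) (lam : ℕ → ℕ) (Vsub : ℕ → Submodule 𝕜 V)
    (F : ℕ → ℕ → Submodule 𝕜 V) (i : ℕ) : Submodule 𝕜 V :=
  (∑ k ∈ Finset.range (LSidx n lam i), Vsub k) +
    F (LSidx n lam i) (i - pSum lam (LSidx n lam i))

end LinearDefs

/-!
Write `W_j = V_0 ⊕ ... ⊕ V_{j-1}` and `p_j = λ_0 + ... + λ_{j-1}`. Whenever `p_j ≤ i ≤ p_{j+1}`,
the Lusztig–Spaltenstein flag is `F̄_i = W_j ⊕ F j (i - p_j)`; at a boundary `i = p_j` the two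
neighbouring descriptions agree because `W_j ⊆ W_{j'}` have the same dimension when
`p_j = p_{j'}`. Hence consecutive members `F̄_i, F̄_{i+1}` lie in a common block, where they are
`W_j ⊕ F j d` and `W_j ⊕ F j (d+1)`. So `dim F̄_i = p_j + d = i`, and `e F̄_{i+1} ⊆ F̄_i` since `e`
preserves `W_j`, while `e x = (e x - e0 x) + e0 x ∈ W_j + F j d` for `x ∈ F j (d+1)`.
-/

open Finset Module

lemma pSum_mono (lam : ℕ → ℕ) : Monotone (pSum lam) := fun _ _ h =>
  sum_le_sum_of_subset (range_subset_range.2 h)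

lemma pSum_succ (lam : ℕ → ℕ) (j : ℕ) : pSum lam (j + 1) = pSum lam j + lam j :=
  sum_range_succ _ _

lemma exists_pSum_le_lt_pSum_succ (lam : ℕ → ℕ) {n i : ℕ} (h : i < pSum lam n) :
    ∃ j < n, pSum lam j ≤ i ∧ i < pSum lam (j + 1) := by
  induction n with
  | zero => simp [pSum] at h
  | succ m ih =>
    by_cases hm : i < pSum lam m
    · obtain ⟨j, hj, hij⟩ := ih hm
      exact ⟨j, by omega, hij⟩
    · exact ⟨m, by omega, by omega, h⟩

lemma LSidx_eq (lam : ℕ → ℕ) {n i j : ℕ} (hj : j ≤ n)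
    (h1 : pSum lam j < i) (h2 : i ≤ pSum lam (j + 1)) : LSidx n lam i = j := by
  rw [LSidx, Nat.findGreatest_eq_iff]
  exact ⟨hj, fun _ => h1, fun m hm _ => not_lt.2 (h2.trans (pSum_mono lam hm))⟩

lemma LSidx_zero (n : ℕ) (lam : ℕ → ℕ) : LSidx n lam 0 = 0 := by
  simp [LSidx, Nat.findGreatest_eq_zero_iff]

lemma LSidx_of_pSum_lt (lam : ℕ → ℕ) {n i : ℕ} (h : pSum lam n < i) : LSidx n lam i = n :=
  Nat.findGreatest_eq h

theorem Submodule.map_le_sup_map_of_sub_mem {R M M₂ : Type*} [Ring R] [AddCommGroup M]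
    [AddCommGroup M₂] [Module R M] [Module R M₂] (f g : M →ₗ[R] M₂) {P : Submodule R M₂}
    {U : Submodule R M} (h : ∀ x ∈ U, f x - g x ∈ P) : U.map f ≤ P ⊔ U.map g := by
  rintro _ ⟨x, hx, rfl⟩
  rw [← sub_add_cancel (f x) (g x)]
  exact Submodule.add_mem_sup (h x hx) (Submodule.mem_map_of_mem hx)

theorem Submodule.finrank_sup_of_disjoint {K V : Type*} [DivisionRing K] [AddCommGroup V]
    [Module K V] [FiniteDimensional K V] {U W : Submodule K V} (h : Disjoint U W) :
    finrank K ↥(U ⊔ W) = finrank K U + finrank K W := by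
  rw [← Submodule.finrank_sup_add_finrank_inf_eq, h.eq_bot, finrank_bot, add_zero]

section Decomposition

variable {𝕜 V : Type*} [Field 𝕜] [AddCommGroup V] [Module 𝕜 V]
  {n : ℕ} {lam : ℕ → ℕ} {Vsub : ℕ → Submodule 𝕜 V}

lemma sum_range_succ_eq_sup (Vsub : ℕ → Submodule 𝕜 V) (j : ℕ) :
    ∑ k ∈ range (j + 1), Vsub k = (∑ k ∈ range j, Vsub k) ⊔ Vsub j := by
  rw [sum_range_succ, Submodule.add_eq_sup]

namespace IsDecomp

lemma disjoint_sum_range (hd : IsDecomp n lam Vsub) {j : ℕ} (hj : j < n) :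
    Disjoint (∑ k ∈ range j, Vsub k) (Vsub j) := by
  refine ((hd.indep j hj).mono_right (sum_le_sum_of_subset fun k hk => ?_)).symm
  simp only [mem_range, mem_erase] at hk ⊢
  omega

variable [FiniteDimensional 𝕜 V]

lemma finrank_sum_range (hd : IsDecomp n lam Vsub) {j : ℕ} (hj : j ≤ n) :
    finrank 𝕜 ↥(∑ k ∈ range j, Vsub k) = pSum lam j := by
  induction j with
  | zero => rw [sum_range_zero, pSum, sum_range_zero]; exact finrank_bot 𝕜 V
  | succ j ih =>
    rw [sum_range_succ_eq_sup, Submodule.finrank_sup_of_disjoint (hd.disjoint_sum_range hj),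
      ih (by omega), hd.dim j hj, pSum_succ]

lemma sum_range_eq_of_pSum_eq (hd : IsDecomp n lam Vsub) {j j' : ℕ} (hjj' : j ≤ j')
    (hj' : j' ≤ n) (h : pSum lam j = pSum lam j') :
    ∑ k ∈ range j, Vsub k = ∑ k ∈ range j', Vsub k :=
  Submodule.eq_of_le_of_finrank_eq (sum_le_sum_of_subset (range_subset_range.2 hjj'))
    (by rw [hd.finrank_sum_range (hjj'.trans hj'), hd.finrank_sum_range hj', h])

end IsDecomp

variable {e e0 : V →ₗ[𝕜] V}

lemma map_sum_range_le
    (he0 : ∀ j < n, ∀ x ∈ Vsub j, e0 x ∈ Vsub j ∧ e x - e0 x ∈ ∑ k ∈ range j, Vsub k)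
    {j : ℕ} (hj : j ≤ n) :
    (∑ k ∈ range j, Vsub k).map e ≤ ∑ k ∈ range j, Vsub k := by
  induction j with
  | zero => simp
  | succ j ih =>
    have hj : j < n := hj
    rw [sum_range_succ_eq_sup, Submodule.map_sup]
    refine sup_le ((ih hj.le).trans le_sup_left) ?_
    refine (Submodule.map_le_sup_map_of_sub_mem e e0 fun x hx => (he0 j hj x hx).2).trans ?_
    exact sup_le_sup_left (Submodule.map_le_iff_le_comap.2 fun x hx => (he0 j hj x hx).1) _

lemma map_sum_range_sup_le
    (he0 : ∀ j < n, ∀ x ∈ Vsub j, e0 x ∈ Vsub j ∧ e x - e0 x ∈ ∑ k ∈ range j, Vsub k)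
    {j : ℕ} (hj : j < n) {U U' : Submodule 𝕜 V} (hU : U ≤ Vsub j) (hUU' : U.map e0 ≤ U') :
    ((∑ k ∈ range j, Vsub k) ⊔ U).map e ≤ (∑ k ∈ range j, Vsub k) ⊔ U' := by
  rw [Submodule.map_sup]
  refine sup_le ((map_sum_range_le he0 hj.le).trans le_sup_left) ?_
  refine (Submodule.map_le_sup_map_of_sub_mem e e0 fun x hx => (he0 j hj x (hU hx)).2).trans ?_
  exact sup_le_sup_left hUU' _

end Decomposition

section LSflag

variable {𝕜 V : Type*} [Field 𝕜] [AddCommGroup V] [Module 𝕜 V] [FiniteDimensional 𝕜 V]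
  {n : ℕ} {lam : ℕ → ℕ} {Vsub : ℕ → Submodule 𝕜 V} {F : ℕ → ℕ → Submodule 𝕜 V}

lemma LSflag_eq_sup (hd : IsDecomp n lam Vsub) (hF : ∀ k < n, IsFlagOf (Vsub k) (lam k) (F k))
    {i j : ℕ} (hj : j < n) (h1 : pSum lam j ≤ i) (h2 : i ≤ pSum lam (j + 1)) :
    LSflag n lam Vsub F i = (∑ k ∈ range j, Vsub k) ⊔ F j (i - pSum lam j) := by
  rcases h1.lt_or_eq with h1 | rfl
  · rw [LSflag, LSidx_eq lam hj.le h1 h2, Submodule.add_eq_sup]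
  rw [Nat.sub_self, (hF j hj).bot, sup_bot_eq]
  rcases Nat.eq_zero_or_pos (pSum lam j) with h0 | hpos
  · rw [LSflag, h0, LSidx_zero, Nat.zero_sub, (hF 0 (by omega)).bot, Submodule.add_eq_sup,
      sup_bot_eq]
    exact hd.sum_range_eq_of_pSum_eq (Nat.zero_le j) hj.le (by rw [h0]; rfl)
  -- `pSum lam j` is then the right end of an earlier block `j0`
  obtain ⟨j0, hj0, h3, h4⟩ :=
    exists_pSum_le_lt_pSum_succ lam (n := j) (i := pSum lam j - 1) (by omega)
  have hend : pSum lam (j0 + 1) = pSum lam j := le_antisymm (pSum_mono lam hj0) (by omega)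
  rw [LSflag, LSidx_eq lam (by omega) (by omega) hend.ge, ← hend, pSum_succ,
    Nat.add_sub_cancel_left, (hF j0 (by omega)).top, Submodule.add_eq_sup,
    ← sum_range_succ_eq_sup]
  exact hd.sum_range_eq_of_pSum_eq hj0 hj.le hend

lemma LSflag_eq_top (hd : IsDecomp n lam Vsub) (hF : ∀ k < n, IsFlagOf (Vsub k) (lam k) (F k))
    {i : ℕ} (hi : pSum lam n ≤ i) : LSflag n lam Vsub F i = ⊤ := by
  rcases hi.lt_or_eq with hi | rfl
  · rw [eq_top_iff, ← hd.total, LSflag, LSidx_of_pSum_lt lam hi, Submodule.add_eq_sup]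
    exact le_sup_left
  cases n with
  | zero =>
    have hbot : (⊥ : Submodule 𝕜 V) = ⊤ := by simpa using hd.total
    exact top_unique (hbot ▸ bot_le)
  | succ m =>
    rw [LSflag_eq_sup hd hF (Nat.lt_succ_self m) (pSum_mono lam m.le_succ) le_rfl, pSum_succ,
      Nat.add_sub_cancel_left, (hF m m.lt_succ_self).top, ← sum_range_succ_eq_sup, hd.total]

lemma exists_LSflag_eq_sup_of_lt (hd : IsDecomp n lam Vsub)
    (hF : ∀ k < n, IsFlagOf (Vsub k) (lam k) (F k)) {i : ℕ} (hi : i < pSum lam n) :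
    ∃ j < n, ∃ d < lam j,
      LSflag n lam Vsub F i = (∑ k ∈ range j, Vsub k) ⊔ F j d ∧
      LSflag n lam Vsub F (i + 1) = (∑ k ∈ range j, Vsub k) ⊔ F j (d + 1) := by
  obtain ⟨j, hj, h1, h2⟩ := exists_pSum_le_lt_pSum_succ lam hi
  refine ⟨j, hj, i - pSum lam j, by rw [pSum_succ] at h2; omega,
    LSflag_eq_sup hd hF hj h1 h2.le, ?_⟩
  rw [LSflag_eq_sup hd hF hj (by omega) h2, Nat.succ_sub h1]

lemma LSflag_le_succ (hd : IsDecomp n lam Vsub) (hF : ∀ k < n, IsFlagOf (Vsub k) (lam k) (F k))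
    (i : ℕ) : LSflag n lam Vsub F i ≤ LSflag n lam Vsub F (i + 1) := by
  rcases lt_or_ge i (pSum lam n) with hi | hi
  · obtain ⟨j, hj, d, -, h, hsucc⟩ := exists_LSflag_eq_sup_of_lt hd hF hi
    rw [h, hsucc]
    exact sup_le_sup_left ((hF j hj).mono d.le_succ) _
  · rw [LSflag_eq_top hd hF (hi.trans i.le_succ)]
    exact le_top

lemma finrank_LSflag (hd : IsDecomp n lam Vsub) (hF : ∀ k < n, IsFlagOf (Vsub k) (lam k) (F k))
    {i : ℕ} (hi : i ≤ pSum lam n) : finrank 𝕜 ↥(LSflag n lam Vsub F i) = i := by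
  rcases hi.lt_or_eq with hi | rfl
  · obtain ⟨j, hj, h1, h2⟩ := exists_pSum_le_lt_pSum_succ lam hi
    rw [LSflag_eq_sup hd hF hj h1 h2.le,
      Submodule.finrank_sup_of_disjoint ((hd.disjoint_sum_range hj).mono_right ((hF j hj).le _)),
      hd.finrank_sum_range hj.le, (hF j hj).dim _ (by rw [pSum_succ] at h2; omega)]
    omega
  · rw [LSflag_eq_top hd hF le_rfl, ← hd.total, hd.finrank_sum_range le_rfl]

lemma map_LSflag_succ_le (hd : IsDecomp n lam Vsub)
    (hF : ∀ k < n, IsFlagOf (Vsub k) (lam k) (F k)) {e e0 : V →ₗ[𝕜] V}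
    (he0 : ∀ j < n, ∀ x ∈ Vsub j, e0 x ∈ Vsub j ∧ e x - e0 x ∈ ∑ k ∈ range j, Vsub k)
    (hspringer : ∀ k < n, ∀ d, (F k (d + 1)).map e0 ≤ F k d) (i : ℕ) :
    (LSflag n lam Vsub F (i + 1)).map e ≤ LSflag n lam Vsub F i := by
  rcases lt_or_ge i (pSum lam n) with hi | hi
  · obtain ⟨j, hj, d, -, h, hsucc⟩ := exists_LSflag_eq_sup_of_lt hd hF hi
    rw [h, hsucc]
    exact map_sum_range_sup_le he0 hj ((hF j hj).le _) (hspringer j hj d)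
  · rw [LSflag_eq_top hd hF hi]
    exact le_top

end LSflag

theorem LSflag_mem_springer_fibre_general
    {𝕜 V : Type*} [Field 𝕜] [AddCommGroup V] [Module 𝕜 V] [FiniteDimensional 𝕜 V]
    (n : ℕ) (lam : ℕ → ℕ)
    (Vsub : ℕ → Submodule 𝕜 V) (hdecomp : IsDecomp n lam Vsub)
    (e e0 : V →ₗ[𝕜] V)
    (he0 : ∀ j < n, ∀ x ∈ Vsub j, e0 x ∈ Vsub j ∧
      e x - e0 x ∈ ∑ k ∈ Finset.range j, Vsub k)
    (F : ℕ → ℕ → Submodule 𝕜 V) (hF : ∀ k < n, IsFlagOf (Vsub k) (lam k) (F k))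
    (hspringer : ∀ k < n, ∀ d, Submodule.map e0 (F k (d + 1)) ≤ F k d) :
    IsFullFlag (∑ k ∈ Finset.range n, lam k) (LSflag n lam Vsub F) ∧
    ∀ i, Submodule.map e (LSflag n lam Vsub F (i + 1)) ≤ LSflag n lam Vsub F i :=
  ⟨{ mono := monotone_nat_of_le_succ (LSflag_le_succ hdecomp hF)
     bot := Submodule.finrank_eq_zero.mp (finrank_LSflag hdecomp hF (Nat.zero_le _))
     top := LSflag_eq_top hdecomp hF le_rfl
     dim := fun _ => finrank_LSflag hdecomp hF },
    map_LSflag_succ_le hdecomp hF he0 hspringer⟩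

/-- Given the decomposition `V = V_0 ⊕ ... ⊕ V_{n-1}`, an endomorphism `e`
with `e(V_j) ⊆ W_j` and its block-diagonal part `e0`, and full flags `F k` of each `V_k`
lying in the Springer fibre of `e0`, the Lusztig–Spaltenstein flag `LS(F 0, ..., F (n-1))`
is a full flag of `V` lying in the Springer fibre of `e`. -/
theorem LSflag_mem_springer_fibre
    {𝕜 V : Type*} [Field 𝕜] [AddCommGroup V] [Module 𝕜 V] [FiniteDimensional 𝕜 V]
    (n : ℕ) (lam : ℕ → ℕ) (hlam : ∀ k < n, 0 < lam k)
    (hdim : Module.finrank 𝕜 V = ∑ k ∈ Finset.range n, lam k)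
    (Vsub : ℕ → Submodule 𝕜 V) (hdecomp : IsDecomp n lam Vsub)
    (e e0 : V →ₗ[𝕜] V)
    (he : ∀ j < n, Submodule.map e (Vsub j) ≤ ∑ k ∈ Finset.range (j + 1), Vsub k)
    (he0 : ∀ j < n, ∀ x ∈ Vsub j, e0 x ∈ Vsub j ∧
      e x - e0 x ∈ ∑ k ∈ Finset.range j, Vsub k)
    (F : ℕ → ℕ → Submodule 𝕜 V) (hF : ∀ k < n, IsFlagOf (Vsub k) (lam k) (F k))
    (hspringer : ∀ k < n, ∀ d, Submodule.map e0 (F k (d + 1)) ≤ F k d) :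
    IsFullFlag (∑ k ∈ Finset.range n, lam k) (LSflag n lam Vsub F) ∧
    ∀ i, Submodule.map e (LSflag n lam Vsub F (i + 1)) ≤ LSflag n lam Vsub F i :=
  LSflag_mem_springer_fibre_general n lam Vsub hdecomp e e0 he0 F hF hspringer
end

section
/- Let V be a finite-dimensional vector space over a field 𝕜, let e be a nilpotent endomorphism of V, and let H ⊆ V be a subspace of codimension 1 with e(H) ⊆ H. Let j ≥ 1 be maximal such that ker(e^{j-1}) ⊆ H (such a maximal j exists, since ker(e^0) = 0 ⊆ H while ker(e^p) = V ⊄ H for p large). Then for every p ≥ 0: dim ker((e|_H)^p) = dim ker(e^p) − 1 if p ≥ j, and dim ker((e|_H)^p) = dim ker(e^p) if p < j. (Equivalently, the Jordan type of e|_H is obtained from the Jordan type of e by removing the last box of column j of its Young diagram.) -/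
/-!
Since `ker (e|_H)^p = H ⊓ ker e^p`, only the position of `ker e^p` relative to the hyperplane `H`
matters. The kernels of the powers of `e` increase with `p`, so `ker e^p ⊆ H` for `p < j`, while
for `p ≥ j` the kernel `ker e^p` is not contained in `H` and hence meets it in a hyperplane of
`ker e^p`.
-/

open Module

theorem LinearMap.ker_pow_le_ker_pow {R M : Type*} [Semiring R] [AddCommMonoid M] [Module R M]
    (f : End R M) {m n : ℕ} (h : m ≤ n) : ker (f ^ m) ≤ ker (f ^ n) := by
  obtain ⟨k, rfl⟩ := Nat.exists_eq_add_of_le h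
  rw [add_comm, pow_add, End.mul_eq_comp]
  exact ker_le_ker_comp _ _

theorem LinearMap.finrank_ker_restrict {R M : Type*} [Ring R] [AddCommGroup M] [Module R M]
    {p : Submodule R M} (f : End R M) (hf : ∀ x ∈ p, f x ∈ p) :
    finrank R (ker (f.restrict hf)) = finrank R ↥(p ⊓ ker f) := by
  rw [ker_restrict, ← Submodule.map_comap_subtype]
  exact (Submodule.finrank_map_subtype_eq p _).symm

theorem Submodule.finrank_inf_add_one_of_not_le {K V : Type*} [DivisionRing K] [AddCommGroup V]
    [Module K V] [FiniteDimensional K V] {H W : Submodule K V}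
    (hH : finrank K H + 1 = finrank K V) (hW : ¬W ≤ H) :
    finrank K ↥(H ⊓ W) + 1 = finrank K W := by
  have hsup : H ⊔ W = ⊤ := by
    have hlt : finrank K H < finrank K ↥(H ⊔ W) :=
      finrank_lt_finrank_of_lt (left_lt_sup.mpr hW)
    exact eq_top_of_finrank_eq (by have := finrank_le (H ⊔ W); omega)
  have := finrank_sup_add_finrank_inf_eq H W
  rw [hsup, finrank_top] at this
  omega

theorem hyperplane_restriction_jordan_type_general
    {𝕜 V : Type*} [Field 𝕜] [AddCommGroup V] [Module 𝕜 V] [FiniteDimensional 𝕜 V]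
    (e : V →ₗ[𝕜] V)
    (H : Submodule 𝕜 V) (hcodim : Module.finrank 𝕜 ↥H + 1 = Module.finrank 𝕜 V)
    (hstab : ∀ x ∈ H, e x ∈ H)
    (j : ℕ)
    (hker : LinearMap.ker (e ^ (j - 1)) ≤ H)
    (hmax : ¬ LinearMap.ker (e ^ j) ≤ H) :
    ∀ p : ℕ,
      (j ≤ p → Module.finrank 𝕜 ↥(LinearMap.ker ((e.restrict hstab) ^ p)) + 1 =
        Module.finrank 𝕜 ↥(LinearMap.ker (e ^ p))) ∧
      (p < j → Module.finrank 𝕜 ↥(LinearMap.ker ((e.restrict hstab) ^ p)) =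
        Module.finrank 𝕜 ↥(LinearMap.ker (e ^ p))) := by
  intro p
  rw [End.pow_restrict, LinearMap.finrank_ker_restrict]
  refine ⟨fun hp => ?_, fun hp => ?_⟩
  · exact Submodule.finrank_inf_add_one_of_not_le hcodim
      fun hle => hmax ((LinearMap.ker_pow_le_ker_pow e hp).trans hle)
  · rw [inf_eq_right.mpr ((LinearMap.ker_pow_le_ker_pow e (by omega)).trans hker)]

/-- Let `e` be a nilpotent endomorphism of a finite-dimensional space `V`
and `H` an `e`-stable hyperplane (codimension 1). If `j ≥ 1` is maximal with
`ker(e^{j-1}) ⊆ H`, then `dim ker((e|_H)^p) = dim ker(e^p) - 1` for `p ≥ j` and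
`dim ker((e|_H)^p) = dim ker(e^p)` for `p < j` (the Jordan type of `e|_H` is obtained from
that of `e` by removing the last box of column `j`). -/
theorem hyperplane_restriction_jordan_type
    {𝕜 V : Type*} [Field 𝕜] [AddCommGroup V] [Module 𝕜 V] [FiniteDimensional 𝕜 V]
    (e : V →ₗ[𝕜] V) (henil : IsNilpotent e)
    (H : Submodule 𝕜 V) (hcodim : Module.finrank 𝕜 ↥H + 1 = Module.finrank 𝕜 V)
    (hstab : ∀ x ∈ H, e x ∈ H)
    (j : ℕ) (hj : 1 ≤ j)
    (hker : LinearMap.ker (e ^ (j - 1)) ≤ H)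
    (hmax : ¬ LinearMap.ker (e ^ j) ≤ H) :
    ∀ p : ℕ,
      (j ≤ p → Module.finrank 𝕜 ↥(LinearMap.ker ((e.restrict hstab) ^ p)) + 1 =
        Module.finrank 𝕜 ↥(LinearMap.ker (e ^ p))) ∧
      (p < j → Module.finrank 𝕜 ↥(LinearMap.ker ((e.restrict hstab) ^ p)) =
        Module.finrank 𝕜 ↥(LinearMap.ker (e ^ p))) :=
  hyperplane_restriction_jordan_type_general e H hcodim hstab j hker hmax
end

section
/- Let V be a finite-dimensional vector space over a field 𝕜, let e be a nilpotent endomorphism of V, and let H ⊆ V be a subspace of codimension 1 with e(H) ⊆ H. Then there exists a Jordan basis B for e and a vector v ∈ B such that H is the linear span of B \ {v}. -/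
/-!
Since `e` is nilpotent, `e(V) + H` is a proper subspace containing `H`, hence `e(V) ⊆ H`. Pick
`v ∉ H`. It suffices to find a Jordan basis `J` of `H` and `g ∈ H` such that `e (v - g)` is `0` or
the top of a chain of `J` (an element of `J \ e '' J`): adjoining `v - g` to `J` then gives `B`.

This is the case `W = H`, `u = e v` of the following statement, proved by well-founded induction
on `W` via `e(W) < W`: for an `e`-stable `W` and `u ∈ W` there are a Jordan basis `J` of `W` and
`g ∈ W` with `u - e g` equal to `0` or to a top of `J`. Apply it to `e(W)` and `e u`, and write
`u' = u - e g`; the tops of the Jordan basis of `e(W)` are lifted to `W` (the top `e u'`, if any,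
to `u'`), and the result is completed to a basis of `W` by vectors of `ker e`; if `e u' = 0` and
`u' ∉ e(W)`, then `u'` is one of these vectors.
-/

/-- A Jordan basis for a nilpotent endomorphism `e`: a basis `B` of `V` such that `e` maps
each basis vector either to another basis vector or to `0`, and no two distinct basis
vectors have the same nonzero image (so `B` decomposes into disjoint Jordan chains). -/
def IsJordanBasis {𝕜 V : Type*} [Field 𝕜] [AddCommGroup V] [Module 𝕜 V]
    (e : V →ₗ[𝕜] V) (B : Set V) : Prop :=
  LinearIndependent 𝕜 (fun b : B => (b : V)) ∧
  Submodule.span 𝕜 B = ⊤ ∧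
  (∀ b ∈ B, e b ∈ B ∨ e b = 0) ∧
  ∀ b ∈ B, ∀ b' ∈ B, b ≠ b' → e b ≠ 0 → e b' ≠ 0 → e b ≠ e b'

open Submodule
open LinearMap (ker)

namespace Submodule

section DisjointMap

variable {R M M₂ : Type*} [Ring R] [AddCommGroup M] [Module R M] [AddCommGroup M₂]
  [Module R M₂] {f : M →ₗ[R] M₂} {P Q : Submodule R M}

theorem eq_zero_of_map_add_eq_zero (hPQ : Disjoint (P.map f) (Q.map f))
    (hQ : Disjoint Q (ker f)) {p q : M} (hp : p ∈ P) (hq : q ∈ Q) (h : f (p + q) = 0) :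
    q = 0 := by
  have hfq : f q = -f p := eq_neg_of_add_eq_zero_right (by rwa [map_add] at h)
  refine disjoint_def.mp hQ q hq (disjoint_def.mp hPQ (f q) ?_ (mem_map_of_mem hq))
  exact hfq ▸ neg_mem (mem_map_of_mem hp)

theorem disjoint_of_disjoint_map (hPQ : Disjoint (P.map f) (Q.map f))
    (hQ : Disjoint Q (ker f)) : Disjoint P Q :=
  disjoint_def.mpr fun x hxP hxQ =>
    neg_eq_zero.mp (eq_zero_of_map_add_eq_zero hPQ hQ hxP (neg_mem hxQ) (by simp))

theorem ker_inf_sup_le_of_disjoint_map (hPQ : Disjoint (P.map f) (Q.map f))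
    (hQ : Disjoint Q (ker f)) : ker f ⊓ (P ⊔ Q) ≤ P := by
  rintro x ⟨hx, hxPQ⟩
  obtain ⟨p, hp, q, hq, rfl⟩ := mem_sup.mp hxPQ
  rwa [eq_zero_of_map_add_eq_zero hPQ hQ hp hq hx, add_zero]

end DisjointMap

theorem map_sup_lt_of_isNilpotent {R M : Type*} [Semiring R] [AddCommMonoid M] [Module R M]
    {f : Module.End R M} (hf : IsNilpotent f) {H W : Submodule R M} (hW : W.map f ≤ W)
    (hH : H.map f ≤ H) (hHW : H < W) : W.map f ⊔ H < W := by
  refine lt_of_le_of_ne (sup_le hW hHW.le) fun heq => hHW.ne ?_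
  have hpow : ∀ k, W.map (f ^ k) ⊔ H = W := by
    intro k
    induction k with
    | zero => rw [pow_zero, Module.End.one_eq_id, map_id, sup_eq_left.mpr hHW.le]
    | succ k ih =>
      calc W.map (f ^ (k + 1)) ⊔ H = (W.map (f ^ k)).map f ⊔ H.map f ⊔ H := by
            rw [pow_succ', Module.End.mul_eq_comp, map_comp, sup_assoc, sup_eq_right.mpr hH]
        _ = W := by rw [← map_sup, ih, heq]
  obtain ⟨n, hn⟩ := hf
  simpa [hn] using hpow n

theorem isCoatom_of_finrank_add_one_eq {K V : Type*} [DivisionRing K] [AddCommGroup V]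
    [Module K V] [FiniteDimensional K V] {H : Submodule K V}
    (hH : Module.finrank K H + 1 = Module.finrank K V) : IsCoatom H := by
  refine ⟨fun h => by rw [h, finrank_top] at hH; omega, fun W hW => eq_top_of_finrank_eq ?_⟩
  have := finrank_lt_finrank_of_lt hW
  have := finrank_le W
  omega

end Submodule

section JordanSet

variable {𝕜 V : Type*} [DivisionRing 𝕜] [AddCommGroup V] [Module 𝕜 V] {e : V →ₗ[𝕜] V}
  {J J₀ : Set V}

/-- A linearly independent union of Jordan chains of `e`, whose tops are the elements of
`J \ e '' J`. -/
structure IsJordanSet (e : V →ₗ[𝕜] V) (J : Set V) : Prop where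
  linearIndepOn : LinearIndepOn 𝕜 id J
  mapsTo : Set.MapsTo e J (insert 0 J)
  injOn : Set.InjOn e (J \ ker e)

namespace IsJordanSet

theorem empty : IsJordanSet e ∅ :=
  ⟨linearIndepOn_empty 𝕜 id, Set.mapsTo_empty _ _, fun _ hx => hx.1.elim⟩

theorem map_span_le (hJ : IsJordanSet e J) : (span 𝕜 J).map e ≤ span 𝕜 (J ∩ e '' J) := by
  rw [Submodule.map_span, span_le]
  rintro _ ⟨b, hb, rfl⟩
  rcases Set.mem_insert_iff.mp (hJ.mapsTo hb) with h | h
  · rw [h]; exact zero_mem _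
  · exact subset_span ⟨h, b, hb, rfl⟩

theorem insert_of_map_eq_zero_or_mem_sdiff_image (hJ : IsJordanSet e J) {x : V}
    (hx : x ∉ span 𝕜 J) (hex : e x = 0 ∨ e x ∈ J \ e '' J) : IsJordanSet e (insert x J) where
  linearIndepOn := hJ.linearIndepOn.id_insert hx
  mapsTo := by
    rintro b (rfl | hb)
    · rcases hex with h | h
      · exact Or.inl h
      · exact Or.inr (Or.inr h.1)
    · exact Set.insert_subset_insert (Set.subset_insert _ _) (hJ.mapsTo hb)
  injOn := by
    have hxJ : x ∉ J \ ker e := fun h => hx (subset_span h.1)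
    refine ((Set.injOn_insert hxJ).mpr ⟨hJ.injOn, ?_⟩).mono ?_
    · rintro ⟨b, ⟨hbJ, hbK⟩, hbx⟩
      rcases hex with h | h
      · exact hbK (hbx.trans h)
      · exact h.2 ⟨b, hbJ, hbx⟩
    · rintro y ⟨rfl | hy, hyK⟩
      · exact Set.mem_insert _ _
      · exact Set.mem_insert_of_mem _ ⟨hy, hyK⟩

theorem mem_sdiff_image {J' : Set V} (hJ : IsJordanSet e J)
    (hJJ' : Set.MapsTo e J (insert 0 J')) {x : V} (hx : x ∈ J) (hxJ' : x ∉ J') :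
    x ∈ J \ e '' J := by
  refine ⟨hx, ?_⟩
  rintro ⟨y, hy, rfl⟩
  rcases hJJ' hy with h | h
  · exact hJ.linearIndepOn.ne_zero hx h
  · exact hxJ' h

theorem of_subset_union_ker (hJ₀ : IsJordanSet e J₀) (hJ₀J : J₀ ⊆ J)
    (hJ : J ⊆ J₀ ∪ ker e) (hind : LinearIndepOn 𝕜 id J) : IsJordanSet e J where
  linearIndepOn := hind
  mapsTo b hb := by
    rcases hJ hb with hb | hb
    · exact Set.insert_subset_insert hJ₀J (hJ₀.mapsTo hb)
    · exact Or.inl hb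
  injOn := hJ₀.injOn.mono fun _ hb => Set.mem_sdiff_of_mem ((hJ hb.1).resolve_right hb.2) hb.2

theorem exists_extension (hJ₀ : IsJordanSet e J₀) {W : Submodule 𝕜 V} (hJ₀W : J₀ ⊆ W)
    (hmap : W.map e ≤ (span 𝕜 J₀).map e) {s : Set V} (hs : LinearIndepOn 𝕜 id s)
    (hJ₀s : J₀ ⊆ s) (hsW : s ⊆ J₀ ∪ ↑(W ⊓ ker e)) :
    ∃ J, s ⊆ J ∧ J ⊆ J₀ ∪ ker e ∧ IsJordanSet e J ∧ span 𝕜 J = W := by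
  obtain ⟨J, hJt, hsJ, htJ, hJ⟩ := exists_linearIndepOn_id_extension hs hsW
  have hJker : J ⊆ J₀ ∪ ker e :=
    hJt.trans (Set.union_subset_union_right _ (SetLike.coe_subset_coe.mpr inf_le_right))
  refine ⟨J, hsJ, hJker, hJ₀.of_subset_union_ker (hJ₀s.trans hsJ) hJker hJ, le_antisymm ?_ ?_⟩
  · exact span_le.mpr (hJt.trans (Set.union_subset hJ₀W (SetLike.coe_subset_coe.mpr inf_le_left)))
  · have hJ₀W' : span 𝕜 J₀ ≤ W := span_le.mpr hJ₀W
    have hW : W ≤ span 𝕜 J₀ ⊔ ker e := (LinearMap.map_le_map_iff e).mp hmap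
    calc W = (span 𝕜 J₀ ⊔ ker e) ⊓ W := (inf_eq_right.mpr hW).symm
      _ = span 𝕜 (J₀ ∪ ↑(W ⊓ ker e)) := by
        rw [sup_inf_assoc_of_le _ hJ₀W', span_union, span_eq, inf_comm]
      _ ≤ span 𝕜 J := span_le.mpr htJ

section Lift

variable {ℓ : V → V}

theorem map_span_image_lift (hℓ : ∀ t ∈ J \ e '' J, e (ℓ t) = t) :
    (span 𝕜 (ℓ '' (J \ e '' J))).map e = span 𝕜 (J \ e '' J) := by
  rw [Submodule.map_span, Set.image_image, Set.image_congr hℓ, Set.image_id']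

theorem disjoint_span_image_lift_ker (hJ : IsJordanSet e J)
    (hℓ : ∀ t ∈ J \ e '' J, e (ℓ t) = t) : Disjoint (span 𝕜 (ℓ '' (J \ e '' J))) (ker e) := by
  rw [Set.image_eq_range]
  refine range_ker_disjoint (f := e) ?_
  have : (e ∘ fun t : ↥(J \ e '' J) => ℓ t) = fun t : ↥(J \ e '' J) => (t : V) :=
    funext fun t => hℓ t t.2
  rw [this]
  exact hJ.linearIndepOn.mono Set.sdiff_subset

theorem disjoint_map_span_map_span_image_lift (hJ : IsJordanSet e J)
    (hℓ : ∀ t ∈ J \ e '' J, e (ℓ t) = t) :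
    Disjoint ((span 𝕜 J).map e) ((span 𝕜 (ℓ '' (J \ e '' J))).map e) := by
  have hind : LinearIndepOn 𝕜 id (J \ e '' J ∪ J ∩ e '' J) := by
    rw [Set.sdiff_union_inter]; exact hJ.linearIndepOn
  rw [map_span_image_lift hℓ]
  exact ((linearIndepOn_id_union_iff Set.disjoint_sdiff_inter).mp hind).2.2.symm.mono_left
    hJ.map_span_le

theorem mapsTo_union_image_lift (hJ : IsJordanSet e J)
    (hℓ : ∀ t ∈ J \ e '' J, e (ℓ t) = t) :
    Set.MapsTo e (J ∪ ℓ '' (J \ e '' J)) (insert 0 J) := by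
  rintro b (hb | ⟨t, ht, rfl⟩)
  · exact hJ.mapsTo hb
  · rw [hℓ t ht]; exact Or.inr ht.1

theorem union_image_lift (hJ : IsJordanSet e J) (hℓ : ∀ t ∈ J \ e '' J, e (ℓ t) = t) :
    IsJordanSet e (J ∪ ℓ '' (J \ e '' J)) where
  linearIndepOn := by
    refine hJ.linearIndepOn.id_union ?_ (disjoint_of_disjoint_map
      (hJ.disjoint_map_span_map_span_image_lift hℓ) (hJ.disjoint_span_image_lift_ker hℓ))
    exact (LinearIndepOn.of_comp e ((hJ.linearIndepOn.mono Set.sdiff_subset).congr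
      fun t ht => (hℓ t ht).symm)).id_image
  mapsTo := (mapsTo_union_image_lift hJ hℓ).mono_right
    (Set.insert_subset_insert Set.subset_union_left)
  injOn := by
    have hcross : ∀ x ∈ J \ ker e, ∀ y ∈ ℓ '' (J \ e '' J) \ ker e, e x ≠ e y := by
      rintro x ⟨hx, -⟩ _ ⟨⟨t, ht, rfl⟩, -⟩ hxt
      exact ht.2 ⟨x, hx, hxt.trans (hℓ t ht)⟩
    rw [Set.union_sdiff_distrib, Set.injOn_union
      (Set.disjoint_left.mpr fun x hx hx' => hcross x hx x hx' rfl)]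
    refine ⟨hJ.injOn, ?_, hcross⟩
    rintro _ ⟨⟨t, ht, rfl⟩, -⟩ _ ⟨⟨t', ht', rfl⟩, -⟩ h
    rw [hℓ t ht, hℓ t' ht'] at h
    rw [h]

theorem ker_inf_span_union_image_lift_le (hJ : IsJordanSet e J)
    (hℓ : ∀ t ∈ J \ e '' J, e (ℓ t) = t) :
    ker e ⊓ span 𝕜 (J ∪ ℓ '' (J \ e '' J)) ≤ span 𝕜 J := by
  rw [span_union]
  exact ker_inf_sup_le_of_disjoint_map (hJ.disjoint_map_span_map_span_image_lift hℓ)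
    (hJ.disjoint_span_image_lift_ker hℓ)

theorem subset_image_union_image_lift (hℓ : ∀ t ∈ J \ e '' J, e (ℓ t) = t) :
    J ⊆ e '' (J ∪ ℓ '' (J \ e '' J)) := by
  intro b hb
  by_cases h : b ∈ e '' J
  · exact Set.image_mono Set.subset_union_left h
  · exact ⟨ℓ b, Or.inr ⟨b, ⟨hb, h⟩, rfl⟩, hℓ b ⟨hb, h⟩⟩

end Lift

theorem exists_extension_of_lift (hJ : IsJordanSet e J) {W : Submodule 𝕜 V}
    (hW : W.map e ≤ W) (hJspan : span 𝕜 J = W.map e) {ℓ : V → V}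
    (hℓW : ∀ t ∈ J \ e '' J, ℓ t ∈ W) (hℓ : ∀ t ∈ J \ e '' J, e (ℓ t) = t) {s : Set V}
    (hs : LinearIndepOn 𝕜 id s) (hJs : J ∪ ℓ '' (J \ e '' J) ⊆ s)
    (hsW : s ⊆ J ∪ ℓ '' (J \ e '' J) ∪ ↑(W ⊓ ker e)) :
    ∃ K, s ⊆ K ∧ IsJordanSet e K ∧ span 𝕜 K = W ∧ Set.MapsTo e K (insert 0 J) := by
  have hJW : J ⊆ W := fun x hx => hW (hJspan ▸ subset_span hx)
  have hmap : W.map e ≤ (span 𝕜 (J ∪ ℓ '' (J \ e '' J))).map e := by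
    rw [← hJspan, Submodule.map_span]
    exact span_mono (subset_image_union_image_lift hℓ)
  obtain ⟨K, hsK, hKker, hK, hKspan⟩ := (hJ.union_image_lift hℓ).exists_extension
    (Set.union_subset hJW (Set.image_subset_iff.mpr hℓW)) hmap hs hJs hsW
  exact ⟨K, hsK, hK, hKspan, fun y hy =>
    (hKker hy).elim (fun h => hJ.mapsTo_union_image_lift hℓ h) Or.inl⟩

theorem exists_sub_map_eq_zero_or_mem_sdiff_image_of_span_eq_map (hJ : IsJordanSet e J)
    {W : Submodule 𝕜 V} (hW : W.map e ≤ W) (hJspan : span 𝕜 J = W.map e) {u : V} (hu : u ∈ W)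
    (hu_top : e u = 0 ∨ e u ∈ J \ e '' J) :
    ∃ K z, IsJordanSet e K ∧ span 𝕜 K = W ∧ z ∈ W ∧ (u - e z = 0 ∨ u - e z ∈ K \ e '' K) := by
  have hlift : ∀ t ∈ J \ e '' J, ∃ s ∈ W, e s = t :=
    fun t ht => mem_map.mp (hJspan ▸ subset_span ht.1)
  classical
  choose! ℓ₀ hℓ₀W hℓ₀ using hlift
  -- if `e u` is a top, `u` itself is chosen as its lift
  set ℓ := Function.update ℓ₀ (e u) u
  have hℓ : ∀ t ∈ J \ e '' J, ℓ t ∈ W ∧ e (ℓ t) = t := by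
    intro t ht
    simp only [ℓ, Function.update_apply]
    split_ifs with h
    · exact ⟨hu, h.symm⟩
    · exact ⟨hℓ₀W t ht, hℓ₀ t ht⟩
  have hℓW : ∀ t ∈ J \ e '' J, ℓ t ∈ W := fun t ht => (hℓ t ht).1
  have hℓe : ∀ t ∈ J \ e '' J, e (ℓ t) = t := fun t ht => (hℓ t ht).2
  have hJ₀ := hJ.union_image_lift hℓe
  obtain ⟨K, hJ₀K, hK, hKspan, hKJ⟩ := hJ.exists_extension_of_lift hW hJspan hℓW hℓe
    hJ₀.linearIndepOn le_rfl Set.subset_union_left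
  rcases hu_top with hu0 | hu_top
  · by_cases huW : u ∈ W.map e
    · obtain ⟨z, hz, hez⟩ := mem_map.mp huW
      exact ⟨K, z, hK, hKspan, hz, Or.inl (sub_eq_zero.mpr hez.symm)⟩
    -- otherwise `u` starts a new chain of length one
    have hu_span : u ∉ span 𝕜 (J ∪ ℓ '' (J \ e '' J)) := fun h =>
      huW (hJspan ▸ hJ.ker_inf_span_union_image_lift_le hℓe ⟨hu0, h⟩)
    obtain ⟨K, huK, hK, hKspan, hKJ⟩ := hJ.exists_extension_of_lift hW hJspan hℓW hℓe
      (hJ₀.linearIndepOn.id_insert hu_span) (Set.subset_insert _ _)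
      (Set.insert_subset (Or.inr (mem_inf.mpr ⟨hu, hu0⟩)) Set.subset_union_left)
    refine ⟨K, 0, hK, hKspan, zero_mem _, Or.inr ?_⟩
    rw [map_zero, sub_zero]
    exact hK.mem_sdiff_image hKJ (huK (Set.mem_insert _ _))
      fun h => huW (hJspan ▸ subset_span h)
  · have huJ₀ : u ∈ J ∪ ℓ '' (J \ e '' J) :=
      Or.inr ⟨e u, hu_top, Function.update_self _ _ _⟩
    refine ⟨K, 0, hK, hKspan, zero_mem _, Or.inr ?_⟩
    rw [map_zero, sub_zero]
    exact hK.mem_sdiff_image hKJ (hJ₀K huJ₀) fun h => hu_top.2 ⟨u, h, rfl⟩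

end IsJordanSet

theorem IsJordanSet.isJordanBasis {𝕜 V : Type*} [Field 𝕜] [AddCommGroup V] [Module 𝕜 V]
    {e : V →ₗ[𝕜] V} {B : Set V} (hB : IsJordanSet e B) (hspan : span 𝕜 B = ⊤) :
    IsJordanBasis e B :=
  ⟨hB.linearIndepOn, hspan, fun _ hb => (Set.mem_insert_iff.mp (hB.mapsTo hb)).symm,
    fun _ hb _ hb' hne heb heb' heq => hne (hB.injOn ⟨hb, heb⟩ ⟨hb', heb'⟩ heq)⟩

theorem exists_isJordanSet_sub_map_eq_zero_or_mem_sdiff_image [FiniteDimensional 𝕜 V]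
    (he : IsNilpotent e) (W : Submodule 𝕜 V) (hW : W.map e ≤ W) {u : V} (hu : u ∈ W) :
    ∃ J g, IsJordanSet e J ∧ span 𝕜 J = W ∧ g ∈ W ∧ (u - e g = 0 ∨ u - e g ∈ J \ e '' J) := by
  induction W using WellFoundedLT.induction generalizing u with
  | ind W ih =>
  rcases eq_or_ne W ⊥ with rfl | hW0
  · exact ⟨∅, 0, IsJordanSet.empty, span_empty, zero_mem _, Or.inl (by simpa using hu)⟩
  have hlt : W.map e < W := by
    simpa using map_sup_lt_of_isNilpotent he hW (by rw [Submodule.map_bot])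
      (bot_lt_iff_ne_bot.mpr hW0)
  obtain ⟨J, g₁, hJ, hJspan, hg₁, hg₁_top⟩ := ih _ hlt (map_mono hW) (mem_map_of_mem hu)
  obtain ⟨g, hg, rfl⟩ := mem_map.mp hg₁
  rw [← map_sub] at hg₁_top
  obtain ⟨K, z, hK, hKspan, hz, hz_top⟩ :=
    hJ.exists_sub_map_eq_zero_or_mem_sdiff_image_of_span_eq_map hW hJspan
      (sub_mem hu (hW (mem_map_of_mem hg))) hg₁_top
  exact ⟨K, g + z, hK, hKspan, add_mem hg hz, by rwa [map_add, ← sub_sub]⟩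

end JordanSet

/-- If `e` is a nilpotent endomorphism of a finite-dimensional space `V` and
`H` is an `e`-stable subspace of codimension 1, then there is a Jordan basis `B` for `e` and
a vector `w ∈ B` such that `H` is the span of `B \ {w}`. -/
theorem exists_jordan_basis_adapted_to_hyperplane
    {𝕜 V : Type*} [Field 𝕜] [AddCommGroup V] [Module 𝕜 V] [FiniteDimensional 𝕜 V]
    (e : V →ₗ[𝕜] V) (henil : IsNilpotent e)
    (H : Submodule 𝕜 V) (hcodim : Module.finrank 𝕜 ↥H + 1 = Module.finrank 𝕜 V)
    (hstab : ∀ x ∈ H, e x ∈ H) :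
    ∃ (B : Set V) (w : V), IsJordanBasis e B ∧ w ∈ B ∧
      H = Submodule.span 𝕜 (B \ {w}) := by
  have hH := isCoatom_of_finrank_add_one_eq hcodim
  have hHe : H.map e ≤ H := map_le_iff_le_comap.mpr hstab
  have hrange : (⊤ : Submodule 𝕜 V).map e ≤ H := by
    have hlt := map_sup_lt_of_isNilpotent henil le_top hHe hH.lt_top
    rw [← (hH.le_iff.mp le_sup_right).resolve_left hlt.ne]
    exact le_sup_left
  obtain ⟨v, -, hv⟩ := SetLike.exists_of_lt hH.lt_top
  obtain ⟨J, g, hJ, hJspan, hg, hg_top⟩ := exists_isJordanSet_sub_map_eq_zero_or_mem_sdiff_image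
    henil H hHe (hrange (mem_map_of_mem mem_top))
  have hvg : v - g ∉ span 𝕜 J := fun h => hv (sub_add_cancel v g ▸ add_mem (hJspan ▸ h) hg)
  have hB := hJ.insert_of_map_eq_zero_or_mem_sdiff_image hvg (by rwa [map_sub])
  refine ⟨insert (v - g) J, v - g, hB.isJordanBasis ?_, Set.mem_insert _ _, ?_⟩
  · rw [span_insert, hJspan, sup_comm]
    exact hH.lt_iff.mp (left_lt_sup.mpr fun h => hvg (hJspan ▸ h (mem_span_singleton_self _)))
  · rw [Set.insert_sdiff_self_of_notMem fun h => hvg (subset_span h), hJspan]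
end

section
/- Let e = e_0 + e_1 on the vector space V with basis {v_{i,j,k} : (i,j,k) ∈ 𝕀} be the explicit representative described in the context. Then for every p ≥ 0, dim ker(e^p) = Σ_{j=1}^{m} min(p, μ^Σ_j), where m = max_i m_i and μ^Σ_j = Σ_{i=1}^n μ_{i,j}; that is, e is nilpotent of Jordan type μ^Σ. -/
/-- The index set `𝕀`: 0-indexed triples `(i, j, k)` with `i < n`, `j` a row index of the
partition `μ i`, and `k < μ_{i,j}`. -/
def InIdx (n : ℕ) (μ : ℕ → List ℕ) (x : ℕ × ℕ × ℕ) : Prop :=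
  x.1 < n ∧ x.2.1 < (μ x.1).length ∧ x.2.2 < (μ x.1).getD x.2.1 0

/-- The explicit representative: `v` restricted to `𝕀` is a basis of `V`, `e0` shifts each
basis vector one step down its own Jordan chain (within its Young diagram), and `e1` sends
the first vector `v (i,j,0)` of a chain to the last vector `v (i', j, μ_{i',j} - 1)` of the
chain in the same row `j` of the previous diagram `i' < i` having a nonzero `j`-th part
(and to `0` if no such `i'` exists); `e1` kills all other basis vectors. -/
structure IsRep {𝕜 V : Type*} [Field 𝕜] [AddCommGroup V] [Module 𝕜 V]
    (n : ℕ) (μ : ℕ → List ℕ) (v : ℕ × ℕ × ℕ → V) (e0 e1 : V →ₗ[𝕜] V) : Prop where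
  indep : LinearIndependent 𝕜 (fun x : {x : ℕ × ℕ × ℕ // InIdx n μ x} => v x)
  spans : Submodule.span 𝕜 (v '' {x | InIdx n μ x}) = ⊤
  e0_bot : ∀ i j, InIdx n μ (i, j, 0) → e0 (v (i, j, 0)) = 0
  e0_succ : ∀ i j k, InIdx n μ (i, j, k + 1) → e0 (v (i, j, k + 1)) = v (i, j, k)
  e1_pos : ∀ i j k, InIdx n μ (i, j, k + 1) → e1 (v (i, j, k + 1)) = 0
  e1_link : ∀ i i' j, InIdx n μ (i, j, 0) → i' < i → 0 < (μ i').getD j 0 →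
      (∀ i'', i' < i'' → i'' < i → (μ i'').getD j 0 = 0) →
      e1 (v (i, j, 0)) = v (i', j, (μ i').getD j 0 - 1)
  e1_none : ∀ i j, InIdx n μ (i, j, 0) → (∀ i' < i, (μ i').getD j 0 = 0) →
      e1 (v (i, j, 0)) = 0

/-!
Concatenating the `j`-th rows of the diagrams `μ 0, …, μ (n-1)` gives a row of length `μ^Σ_j`,
and the basis vectors of its boxes, read from left to right, form one Jordan chain of
`e = e0 + e1`: `e0` steps down a chain inside one diagram, and `e1` jumps from the first box of
row `j` of a diagram to the last box of row `j` in the nearest earlier diagram where that row is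
nonempty. Reindexing the basis by positions `(j, t)` with `t < μ^Σ_j` therefore exhibits `e` as
a direct sum of shifts with chain lengths `μ^Σ_j`. Then `e^p` shifts each chain down by `p`, so
its range has dimension `Σ_j (μ^Σ_j - p)`, and rank–nullity gives the kernel.
-/

open Module

section JordanChains

variable {K V ι : Type*} [Field K] [AddCommGroup V] [Module K V] {S : ι → ℕ}

structure IsJordanChainBasis (b : Basis (Σ j, Fin (S j)) K V) (e : V →ₗ[K] V) : Prop where
  apply_zero : ∀ j (h : 0 < S j), e (b ⟨j, ⟨0, h⟩⟩) = 0
  apply_succ : ∀ j t (h : t + 1 < S j), e (b ⟨j, ⟨t + 1, h⟩⟩) = b ⟨j, ⟨t, by omega⟩⟩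

namespace IsJordanChainBasis

variable {b : Basis (Σ j, Fin (S j)) K V} {e : V →ₗ[K] V}

lemma pow_apply_add (h : IsJordanChainBasis b e) (j : ι) {t p : ℕ} (ht : t + p < S j) :
    (e ^ p) (b ⟨j, ⟨t + p, ht⟩⟩) = b ⟨j, ⟨t, by omega⟩⟩ := by
  induction p with
  | zero => rfl
  | succ p ih =>
    calc (e ^ (p + 1)) (b ⟨j, ⟨t + (p + 1), ht⟩⟩) = (e ^ p) (e (b ⟨j, ⟨t + p + 1, ht⟩⟩)) := by
          rw [pow_succ]; rfl
      _ = b ⟨j, ⟨t, by omega⟩⟩ := by rw [h.apply_succ, ih]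

lemma pow_apply_of_lt (h : IsJordanChainBasis b e) (j : ι) {t p : ℕ} (ht : t < S j)
    (htp : t < p) : (e ^ p) (b ⟨j, ⟨t, ht⟩⟩) = 0 := by
  obtain ⟨q, rfl⟩ : ∃ q, p = q + 1 + t := ⟨p - t - 1, by omega⟩
  have hbot : (e ^ t) (b ⟨j, ⟨t, ht⟩⟩) = b ⟨j, ⟨0, by omega⟩⟩ := by
    simpa using h.pow_apply_add j (t := 0) (p := t) (by omega)
  rw [pow_add, pow_succ, Module.End.mul_apply, Module.End.mul_apply, hbot,
    h.apply_zero, map_zero]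

lemma isNilpotent [Fintype ι] (h : IsJordanChainBasis b e) : IsNilpotent e :=
  ⟨Finset.univ.sup S, b.ext fun s => h.pow_apply_of_lt s.1 s.2.isLt
    (s.2.isLt.trans_le (Finset.le_sup (Finset.mem_univ s.1)))⟩

lemma range_pow (h : IsJordanChainBasis b e) (p : ℕ) :
    LinearMap.range (e ^ p) = Submodule.span K
      (Set.range fun s : Σ j, Fin (S j - p) => b ⟨s.1, Fin.castLE (Nat.sub_le _ _) s.2⟩) := by
  rw [LinearMap.range_eq_map, ← b.span_eq, Submodule.map_span, ← Set.range_comp]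
  apply le_antisymm
  · refine Submodule.span_le.2 ?_
    rintro _ ⟨⟨j, t, ht⟩, rfl⟩
    by_cases htp : t < p
    · simp only [Function.comp_apply, h.pow_apply_of_lt j ht htp, SetLike.mem_coe]
      exact Submodule.zero_mem _
    · obtain ⟨t, rfl⟩ : ∃ t', t = t' + p := ⟨t - p, by omega⟩
      exact Submodule.subset_span ⟨⟨j, t, by omega⟩, (h.pow_apply_add j ht).symm⟩
  · refine Submodule.span_le.2 ?_
    rintro _ ⟨⟨j, t, ht⟩, rfl⟩
    exact Submodule.subset_span ⟨⟨j, t + p, by omega⟩, h.pow_apply_add j _⟩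

lemma finrank_ker_pow [Fintype ι] (h : IsJordanChainBasis b e) (p : ℕ) :
    finrank K (LinearMap.ker (e ^ p)) = ∑ j, min p (S j) := by
  have : Module.Finite K V := Module.Finite.of_basis b
  have hV : finrank K V = ∑ j, S j := by simp [finrank_eq_card_basis b]
  have hrange : finrank K (LinearMap.range (e ^ p)) = ∑ j, (S j - p) := by
    rw [h.range_pow, finrank_span_eq_card]
    · simp
    · exact b.linearIndependent.comp (Sigma.map id fun j => Fin.castLE (Nat.sub_le (S j) p))
        (Function.injective_id.sigma_map fun j => Fin.castLE_injective _)
  have hsplit : ∑ j, S j = ∑ j, (S j - p) + ∑ j, min p (S j) := by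
    rw [← Finset.sum_add_distrib]
    exact Finset.sum_congr rfl fun j _ => by omega
  have := LinearMap.finrank_range_add_finrank_ker (e ^ p)
  omega

end IsJordanChainBasis

end JordanChains

section Stacking

variable (n : ℕ) (μ : ℕ → List ℕ)

def rowPartialSum (j i : ℕ) : ℕ := ∑ k ∈ Finset.range i, (μ k).getD j 0

def blockOf (j t : ℕ) : ℕ := Nat.findGreatest (fun i => rowPartialSum μ j i ≤ t) n

/-- The box in position `t` of the concatenation of the `j`-th rows of `μ 0, …, μ (n-1)`. -/
def stackedIdx (j t : ℕ) : ℕ × ℕ × ℕ :=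
  (blockOf n μ j t, j, t - rowPartialSum μ j (blockOf n μ j t))

lemma rowPartialSum_mono (j : ℕ) : Monotone (rowPartialSum μ j) := fun _ _ h =>
  Finset.sum_le_sum_of_subset (Finset.range_subset_range.2 h)

lemma rowPartialSum_succ (j i : ℕ) :
    rowPartialSum μ j (i + 1) = rowPartialSum μ j i + (μ i).getD j 0 :=
  Finset.sum_range_succ _ _

variable {n μ}

lemma getD_eq_zero_of_rowPartialSum_eq {j a b c : ℕ} (hac : a ≤ c) (hcb : c < b)
    (h : rowPartialSum μ j a = rowPartialSum μ j b) : (μ c).getD j 0 = 0 := by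
  have h₁ := rowPartialSum_mono μ j hac
  have h₂ : rowPartialSum μ j (c + 1) ≤ rowPartialSum μ j b := rowPartialSum_mono μ j hcb
  rw [rowPartialSum_succ] at h₂
  omega

lemma rowPartialSum_blockOf_le (j t : ℕ) : rowPartialSum μ j (blockOf n μ j t) ≤ t :=
  Nat.findGreatest_spec (P := fun i => rowPartialSum μ j i ≤ t) (Nat.zero_le n)
    (by simp [rowPartialSum])

lemma blockOf_eq {i j t : ℕ} (hi : i < n) (h₁ : rowPartialSum μ j i ≤ t)
    (h₂ : t < rowPartialSum μ j (i + 1)) : blockOf n μ j t = i := by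
  apply le_antisymm
  · by_contra! h
    have : rowPartialSum μ j (i + 1) ≤ rowPartialSum μ j (blockOf n μ j t) :=
      rowPartialSum_mono μ j h
    have := rowPartialSum_blockOf_le (n := n) (μ := μ) j t
    omega
  · by_contra! h
    exact Nat.findGreatest_is_greatest h hi.le h₁

lemma stackedIdx_add {i j k : ℕ} (hi : i < n) (hk : k < (μ i).getD j 0) :
    stackedIdx n μ j (rowPartialSum μ j i + k) = (i, j, k) := by
  have hblock : blockOf n μ j (rowPartialSum μ j i + k) = i :=
    blockOf_eq hi (Nat.le_add_right _ _) (by rw [rowPartialSum_succ]; omega)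
  simp [stackedIdx, hblock]

lemma exists_stackedIdx_eq {j t : ℕ} (ht : t < rowPartialSum μ j n) :
    ∃ i k, i < n ∧ k < (μ i).getD j 0 ∧ t = rowPartialSum μ j i + k ∧
      stackedIdx n μ j t = (i, j, k) := by
  have hle := rowPartialSum_blockOf_le (n := n) (μ := μ) j t
  have hi : blockOf n μ j t < n := lt_of_le_of_ne (Nat.findGreatest_le n) fun h => by
    rw [h] at hle; omega
  have hlt : t < rowPartialSum μ j (blockOf n μ j t + 1) := by
    by_contra! h
    exact Nat.findGreatest_is_greatest (Nat.lt_succ_self _) (Nat.succ_le_of_lt hi) h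
  rw [rowPartialSum_succ] at hlt
  exact ⟨_, t - rowPartialSum μ j (blockOf n μ j t), hi, by omega, by omega, rfl⟩

lemma inIdx_of_lt_getD {i j k : ℕ} (hi : i < n) (hk : k < (μ i).getD j 0) :
    InIdx n μ (i, j, k) := by
  refine ⟨hi, ?_, hk⟩
  by_contra! h
  rw [List.getD_eq_default _ _ h] at hk
  omega

lemma lt_maxLen_of_inIdx {x : ℕ × ℕ × ℕ} (hx : InIdx n μ x) : x.2.1 < maxLen n μ :=
  hx.2.1.trans_le (Finset.le_sup (f := fun k => (μ k).length) (Finset.mem_range.2 hx.1))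

lemma rowPartialSum_add_lt {i j k : ℕ} (hi : i < n) (hk : k < (μ i).getD j 0) :
    rowPartialSum μ j i + k < rowPartialSum μ j n := by
  have : rowPartialSum μ j (i + 1) ≤ rowPartialSum μ j n := rowPartialSum_mono μ j hi
  rw [rowPartialSum_succ] at this
  omega

variable (n μ) in
def stackedEquiv :
    (Σ j : Fin (maxLen n μ), Fin (rowPartialSum μ j n)) ≃ {x // InIdx n μ x} where
  toFun s := ⟨stackedIdx n μ s.1 s.2, by
    obtain ⟨i, k, hi, hk, -, h⟩ := exists_stackedIdx_eq s.2.isLt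
    rw [h]
    exact inIdx_of_lt_getD hi hk⟩
  invFun x := ⟨⟨x.1.2.1, lt_maxLen_of_inIdx x.2⟩,
    ⟨rowPartialSum μ x.1.2.1 x.1.1 + x.1.2.2, rowPartialSum_add_lt x.2.1 x.2.2.2⟩⟩
  left_inv := by
    rintro ⟨j, t, ht⟩
    obtain ⟨i, k, hi, hk, rfl, h⟩ := exists_stackedIdx_eq ht
    simp only [h]
    rfl
  right_inv := by
    rintro ⟨⟨i, j, k⟩, hx⟩
    exact Subtype.ext (stackedIdx_add hx.1 hx.2.2)

lemma sum_sumShape_s7 (f : ℕ → ℕ) :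
    ∑ j ∈ Finset.range (sumShape n μ).length, f ((sumShape n μ).getD j 0) =
      ∑ j : Fin (maxLen n μ), f (rowPartialSum μ j n) := by
  rw [sumShape, List.length_ofFn, Finset.sum_range]
  refine Finset.sum_congr rfl fun j _ => ?_
  rw [List.getD_eq_getElem _ _ (by simp), List.getElem_ofFn]
  rfl

end Stacking

namespace IsRep

variable {𝕜 V : Type*} [Field 𝕜] [AddCommGroup V] [Module 𝕜 V] {n : ℕ} {μ : ℕ → List ℕ}
  {v : ℕ × ℕ × ℕ → V} {e0 e1 : V →ₗ[𝕜] V}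

lemma add_apply_stackedIdx_zero (hrep : IsRep n μ v e0 e1) {j : ℕ}
    (h : 0 < rowPartialSum μ j n) : (e0 + e1) (v (stackedIdx n μ j 0)) = 0 := by
  obtain ⟨i, k, hi, hk, h0, hidx⟩ := exists_stackedIdx_eq h
  obtain rfl : k = 0 := by omega
  have hx := inIdx_of_lt_getD hi hk
  have hbefore : ∀ i' < i, (μ i').getD j 0 = 0 := fun i' hi' =>
    getD_eq_zero_of_rowPartialSum_eq (Nat.zero_le i') hi'
      (by rw [rowPartialSum, Finset.sum_range_zero]; omega)
  rw [hidx, LinearMap.add_apply, hrep.e0_bot _ _ hx, hrep.e1_none _ _ hx hbefore, add_zero]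

/-- The position after the last box of row `j` of diagram `i` is the first box of row `j` of the
next diagram `i'` with a nonempty row `j`; there `e1` makes the jump. -/
lemma add_apply_stackedIdx_succ (hrep : IsRep n μ v e0 e1) {j t : ℕ}
    (h : t + 1 < rowPartialSum μ j n) :
    (e0 + e1) (v (stackedIdx n μ j (t + 1))) = v (stackedIdx n μ j t) := by
  obtain ⟨i', k', hi', hk', ht', hidx'⟩ := exists_stackedIdx_eq h
  rw [hidx', LinearMap.add_apply]
  rcases k' with _ | k
  · obtain ⟨i, k, hi, hk, ht, hidx⟩ :=
      exists_stackedIdx_eq (show t < rowPartialSum μ j n by omega)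
    have hsucc := rowPartialSum_succ μ j i
    have hii' : i < i' := by
      by_contra! hle
      have := rowPartialSum_mono μ j hle
      omega
    have hend : rowPartialSum μ j (i + 1) = rowPartialSum μ j i' := by
      have : rowPartialSum μ j (i + 1) ≤ rowPartialSum μ j i' := rowPartialSum_mono μ j hii'
      omega
    have hx' := inIdx_of_lt_getD hi' hk'
    rw [hidx, show k = (μ i).getD j 0 - 1 by omega, hrep.e0_bot _ _ hx', zero_add]
    exact hrep.e1_link i' i j hx' hii' (by omega) fun i'' h₁ h₂ =>
      getD_eq_zero_of_rowPartialSum_eq (Nat.succ_le_of_lt h₁) h₂ hend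
  · have hx' := inIdx_of_lt_getD hi' hk'
    rw [show t = rowPartialSum μ j i' + k by omega, stackedIdx_add hi' (by omega),
      hrep.e0_succ _ _ _ hx', hrep.e1_pos _ _ _ hx', add_zero]

noncomputable def stackedBasis (hrep : IsRep n μ v e0 e1) :
    Basis (Σ j : Fin (maxLen n μ), Fin (rowPartialSum μ j n)) 𝕜 V :=
  (Basis.mk hrep.indep (by rw [← hrep.spans, Set.image_eq_range]; exact le_rfl)).reindex
    (stackedEquiv n μ).symm

lemma stackedBasis_apply (hrep : IsRep n μ v e0 e1)
    (s : Σ j : Fin (maxLen n μ), Fin (rowPartialSum μ j n)) :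
    hrep.stackedBasis s = v (stackedIdx n μ s.1 s.2) := by
  simp [stackedBasis, stackedEquiv]

lemma isJordanChainBasis_stackedBasis (hrep : IsRep n μ v e0 e1) :
    IsJordanChainBasis hrep.stackedBasis (e0 + e1) where
  apply_zero j h := by
    rw [stackedBasis_apply]
    exact hrep.add_apply_stackedIdx_zero h
  apply_succ j t h := by
    rw [stackedBasis_apply, stackedBasis_apply]
    exact hrep.add_apply_stackedIdx_succ h

end IsRep

theorem representative_jordan_type_general
    {𝕜 V : Type*} [Field 𝕜] [AddCommGroup V] [Module 𝕜 V]
    (n : ℕ) (μ : ℕ → List ℕ)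
    (v : ℕ × ℕ × ℕ → V) (e0 e1 : V →ₗ[𝕜] V) (hrep : IsRep n μ v e0 e1) :
    IsNilpotent (e0 + e1) ∧
    ∀ p : ℕ, Module.finrank 𝕜 ↥(LinearMap.ker ((e0 + e1) ^ p)) =
      ∑ j ∈ Finset.range (sumShape n μ).length, min p ((sumShape n μ).getD j 0) := by
  have hchains := hrep.isJordanChainBasis_stackedBasis
  refine ⟨hchains.isNilpotent, fun p => ?_⟩
  rw [hchains.finrank_ker_pow, sum_sumShape_s7 (min p)]

/-- The explicit representative `e = e0 + e1` is nilpotent of Jordan type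
`μ^Σ`: for every `p ≥ 0`, `dim ker(e^p) = Σ_j min(p, μ^Σ_j)`. -/
theorem representative_jordan_type
    {𝕜 V : Type*} [Field 𝕜] [AddCommGroup V] [Module 𝕜 V]
    (n : ℕ) (μ : ℕ → List ℕ)
    (hpart : ∀ i < n, IsPartitionL (μ i)) (hcomp : ∀ i < n, 0 < (μ i).sum)
    (v : ℕ × ℕ × ℕ → V) (e0 e1 : V →ₗ[𝕜] V) (hrep : IsRep n μ v e0 e1) :
    IsNilpotent (e0 + e1) ∧
    ∀ p : ℕ, Module.finrank 𝕜 ↥(LinearMap.ker ((e0 + e1) ^ p)) =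
      ∑ j ∈ Finset.range (sumShape n μ).length, min p ((sumShape n μ).getD j 0) :=
  representative_jordan_type_general n μ v e0 e1 hrep
end
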